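/- Fix x ∈ ℝ^d and let g(s,t) := 1/(log(e+t) + log(e+s)). Then the function t ↦ t^{1/2} · g(|x|, t) is increasing on [0, ∞); consequently ∫_0^t g(|x|, s) ds ≤ 2 t · g(|x|, t) for all t ≥ 0. -/

import Mathlib

open Real

noncomputable def gFun (s t : ℝ) : ℝ :=
  1 / (Real.log (Real.exp 1 + t) + Real.log (Real.exp 1 + s))

/-!
With `L(t) = log (e + t)` and `a = log (e + |x|) ≥ 1`, the derivative of `√t / (L(t) + a)` has
the sign of `(L(t) + a) (e + t) - 2t ≥ 2 (e + t) - 2t > 0`. Monotonicity then gives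
`g(|x|, s) ≤ √t g(|x|, t) / √s` for `0 < s ≤ t`, and `∫₀ᵗ s^(-1/2) ds = 2√t`.
-/

open Set

lemma one_le_log_exp_one_add {t : ℝ} (ht : 0 ≤ t) : 1 ≤ log (exp 1 + t) := by
  rw [le_log_iff_exp_le (by positivity)]
  linarith

lemma continuousOn_log_exp_one_add : ContinuousOn (fun t => log (exp 1 + t)) (Ici 0) :=
  (continuous_const.add continuous_id).continuousOn.log fun t (ht : 0 ≤ t) =>
    (by positivity : 0 < exp 1 + t).ne'

lemma continuousOn_gFun {s : ℝ} (hs : 0 ≤ s) : ContinuousOn (gFun s) (Ici 0) :=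
  continuousOn_const.div (continuousOn_log_exp_one_add.add continuousOn_const) fun t ht => by
    linarith [one_le_log_exp_one_add ht, one_le_log_exp_one_add hs]

lemma hasDerivAt_sqrt_div_log_exp_one_add_add (a : ℝ) {t : ℝ} (ht : 0 < t)
    (hL : log (exp 1 + t) + a ≠ 0) :
    HasDerivAt (fun t => √t / (log (exp 1 + t) + a))
      (((log (exp 1 + t) + a) * (exp 1 + t) - 2 * t) /
        (2 * √t * (exp 1 + t) * (log (exp 1 + t) + a) ^ 2)) t := by
  have he : 0 < exp 1 + t := by positivity
  have hlog : HasDerivAt (fun t => log (exp 1 + t) + a) (1 / (exp 1 + t)) t := by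
    simpa only [one_div, id_eq] using
      (((hasDerivAt_id t).const_add (exp 1)).log he.ne').add_const a
  refine ((hasDerivAt_sqrt ht.ne').div hlog hL).congr_deriv ?_
  have hs : 0 < √t := sqrt_pos.mpr ht
  field_simp
  rw [sq_sqrt ht.le]

lemma monotoneOn_sqrt_div_log_exp_one_add_add {a : ℝ} (ha : 1 ≤ a) :
    MonotoneOn (fun t => √t / (log (exp 1 + t) + a)) (Ici 0) := by
  have hL : ∀ t ∈ Ici (0 : ℝ), 2 ≤ log (exp 1 + t) + a := fun t ht => by
    linarith [one_le_log_exp_one_add ht]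
  have hcont : ContinuousOn (fun t => √t / (log (exp 1 + t) + a)) (Ici 0) :=
    continuous_sqrt.continuousOn.div (continuousOn_log_exp_one_add.add continuousOn_const)
      fun t ht => by linarith [hL t ht]
  refine monotoneOn_of_hasDerivWithinAt_nonneg (convex_Ici 0) hcont (fun t ht =>
    (hasDerivAt_sqrt_div_log_exp_one_add_add a (interior_Ici.subset ht) ?_).hasDerivWithinAt) ?_
  · linarith [hL t (interior_subset ht)]
  intro t ht
  replace ht : 0 < t := interior_Ici.subset ht
  exact div_nonneg (by nlinarith [hL t ht.le, exp_pos 1]) (by positivity)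

lemma intervalIntegral_le_two_mul_of_monotoneOn_sqrt_mul {f : ℝ → ℝ} {t : ℝ} (ht : 0 ≤ t)
    (hf : IntervalIntegrable f MeasureTheory.volume 0 t)
    (hmono : MonotoneOn (fun s => √s * f s) (Ioc 0 t)) :
    ∫ s in (0 : ℝ)..t, f s ≤ 2 * t * f t := by
  have hbound : ∀ s ∈ Ioo 0 t, f s ≤ (√t * f t) * s ^ (-(1 / 2) : ℝ) := by
    rintro s ⟨hs, hst⟩
    rw [rpow_neg hs.le, ← sqrt_eq_rpow, ← div_eq_mul_inv, le_div_iff₀ (sqrt_pos.mpr hs),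
      mul_comm]
    exact hmono ⟨hs, hst.le⟩ ⟨hs.trans hst, le_rfl⟩ hst.le
  calc ∫ s in (0 : ℝ)..t, f s ≤ ∫ s in (0 : ℝ)..t, (√t * f t) * s ^ (-(1 / 2) : ℝ) :=
        intervalIntegral.integral_mono_on_of_le_Ioo ht hf
          ((intervalIntegral.intervalIntegrable_rpow' (by norm_num)).const_mul _) hbound
    _ = 2 * t * f t := by
        rw [intervalIntegral.integral_const_mul, integral_rpow (Or.inl (by norm_num)),
          zero_rpow (by norm_num)]
        norm_num [← sqrt_eq_rpow]
        linear_combination 2 * f t * mul_self_sqrt ht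

/-- **Monotonicity of `t^{1/2} g(|x|,t)`.** For fixed `x ∈ ℝ^d`, the function
`t ↦ √t · g(|x|,t)` is increasing on `[0,∞)`; consequently
`∫_0^t g(|x|,s) ds ≤ 2 t g(|x|,t)` for all `t ≥ 0`. -/
theorem sqrt_mul_g_monotone {d : ℕ} (x : EuclideanSpace ℝ (Fin d)) :
    MonotoneOn (fun t : ℝ => Real.sqrt t * gFun ‖x‖ t) (Set.Ici (0 : ℝ)) ∧
      ∀ t : ℝ, 0 ≤ t → (∫ s in (0:ℝ)..t, gFun ‖x‖ s) ≤ 2 * t * gFun ‖x‖ t := by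
  have hmono : MonotoneOn (fun t : ℝ => √t * gFun ‖x‖ t) (Ici 0) := by
    simpa only [gFun, mul_one_div] using
      monotoneOn_sqrt_div_log_exp_one_add_add (one_le_log_exp_one_add (norm_nonneg x))
  refine ⟨hmono, fun t ht => intervalIntegral_le_two_mul_of_monotoneOn_sqrt_mul ht ?_
    (hmono.mono fun s hs => hs.1.le)⟩
  exact ((continuousOn_gFun (norm_nonneg x)).mono Icc_subset_Ici_self).intervalIntegrable_of_Icc
    ht
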